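/- Let e₂ : [t₀,∞) → ℝ be differentiable, r = ė₂ + α₂e₂ with α₂ > 0, and N_d : [t₀,∞) → ℝ differentiable with |N_d(t)| ≤ ζ_N and |Ṅ_d(t)| ≤ ζ_Ṅ for all t. If β > ζ_N + ζ_Ṅ/α₂, then for all t ≥ t₀: ∫_{t₀}^{t} r(τ)(N_d(τ) − β·sgn(e₂(τ))) dτ ≤ β|e₂(t₀)| − e₂(t₀)N_d(t₀). -/

import Mathlib

/-!
Put `V = β |e₂| - e₂ N_d`, which is nonnegative since `β ≥ ζ_N`. Pointwise, the integrand `L`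
is at most the left derivative of `-V` plus `α₂ e₂ N_d - (α₂ β - ζ_Ṅ) |e₂| ≤ 0`, so the
FTC inequality for one-sided derivatives of a continuous function gives
`∫ L ≤ V(t₀) - V(t) ≤ V(t₀)`. Left derivatives are essential: at a zero of `e₂` the left
derivative of `|e₂|` is `-|ė₂| ≤ ė₂ sgn e₂ = 0`, while the right one, `|ė₂|`, has the wrong sign.
If `L` is not integrable, the integral is `0 ≤ V(t₀)`.
-/

open Set MeasureTheory intervalIntegral

theorem integral_le_sub_of_hasDeriv_left_of_le {g g' φ : ℝ → ℝ} {a b : ℝ} (hab : a ≤ b)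
    (hcont : ContinuousOn g (Icc a b))
    (hderiv : ∀ x ∈ Ioo a b, HasDerivWithinAt g (g' x) (Iio x) x)
    (φint : IntervalIntegrable φ volume a b) (hφg : ∀ x ∈ Ioo a b, φ x ≤ g' x) :
    ∫ y in a..b, φ y ≤ g b - g a := by
  have hneg : ∀ x ∈ Ioo (-b) (-a), -x ∈ Ioo a b := fun x hx =>
    ⟨lt_neg_of_lt_neg hx.2, neg_lt.1 hx.1⟩
  have key := integral_le_sub_of_hasDeriv_right_of_le (neg_le_neg hab)
    (g := fun x => -g (-x)) (g' := fun x => g' (-x)) (φ := fun x => φ (-x))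
    (hcont.comp continuous_neg.continuousOn fun x hx => ⟨le_neg.1 hx.2, neg_le.1 hx.1⟩).neg
    (fun x hx => by
      simpa [Function.comp_def] using ((hderiv (-x) (hneg x hx)).scomp x
        (hasDerivWithinAt_neg x (Ioi x)) fun y (hy : x < y) => neg_lt_neg hy).fun_neg)
    ((intervalIntegrable_iff_integrableOn_Icc_of_le (neg_le_neg hab)).1
      ((IntervalIntegrable.iff_comp_neg (f := φ)).1 φint.symm))
    fun x hx => hφg (-x) (hneg x hx)
  simpa [integral_comp_neg, sub_eq_neg_add, add_comm] using key

theorem HasDerivAt.hasDerivWithinAt_abs_Iio_of_eq_zero {f : ℝ → ℝ} {f' x : ℝ}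
    (hf : HasDerivAt f f' x) (h₀ : f x = 0) :
    HasDerivWithinAt (fun y => |f y|) (-|f'|) (Iio x) x := by
  rw [hasDerivWithinAt_iff_isLittleO]
  have hlin : (fun y => f y - (y - x) * f') =o[nhds x] fun y => y - x := by
    simpa [h₀, smul_eq_mul] using hasDerivAt_iff_isLittleO.1 hf
  refine (Asymptotics.IsBigO.of_bound' ?_).trans_isLittleO (hlin.mono nhdsWithin_le_nhds)
  filter_upwards [self_mem_nhdsWithin] with y (hy : y < x)
  have hcone : |(y - x) * f'| = (y - x) * -|f'| := by
    rw [abs_mul, abs_of_neg (sub_neg.2 hy)]; ring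
  simpa [h₀, ← hcone] using abs_abs_sub_abs_le_abs_sub (f y) ((y - x) * f')

theorem HasDerivAt.hasDerivWithinAt_abs_Iio {f : ℝ → ℝ} {f' x : ℝ} (hf : HasDerivAt f f' x) :
    HasDerivWithinAt (fun y => |f y|) (if f x = 0 then -|f'| else f' * Real.sign (f x))
      (Iio x) x := by
  rcases lt_trichotomy (f x) 0 with hneg | hzero | hpos
  · rw [if_neg hneg.ne, Real.sign_of_neg hneg, mul_neg_one]
    exact ((hasDerivAt_abs_neg hneg).comp x hf).hasDerivWithinAt.congr_deriv (by ring)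
  · rw [if_pos hzero]
    exact hf.hasDerivWithinAt_abs_Iio_of_eq_zero hzero
  · rw [if_neg hpos.ne', Real.sign_of_pos hpos, mul_one]
    exact ((hasDerivAt_abs_pos hpos).comp x hf).hasDerivWithinAt.congr_deriv (by ring)

theorem mul_le_abs_mul_of_abs_le {x y c : ℝ} (hy : |y| ≤ c) : x * y ≤ |x| * c :=
  (le_abs_self _).trans (abs_mul x y ▸ mul_le_mul_of_nonneg_left hy (abs_nonneg x))

theorem Real.mul_sign_self (x : ℝ) : x * Real.sign x = |x| := by
  rcases lt_trichotomy x 0 with h | rfl | h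
  · rw [Real.sign_of_neg h, abs_of_neg h, mul_neg_one]
  · simp
  · rw [Real.sign_of_pos h, abs_of_pos h, mul_one]

theorem rise_integrand_sub_le {e e' n n' d α β ζ' : ℝ} (hd : d ≤ e' * Real.sign e) (hβ : 0 ≤ β)
    (hn' : |n'| ≤ ζ') :
    (e' + α * e) * (n - β * Real.sign e) - (α * e * n - (α * β - ζ') * |e|)
      ≤ e' * n + e * n' - β * d := by
  have hsign := Real.mul_sign_self e
  have hcross : e * -n' ≤ |e| * ζ' := mul_le_abs_mul_of_abs_le (by rwa [abs_neg])
  linear_combination -(α * β) * hsign + hcross + mul_le_mul_of_nonneg_left hd hβ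

theorem integral_rise_integrand_le {e e' n n' : ℝ → ℝ} {α β ζ' a b : ℝ} (hab : a ≤ b)
    (he : ∀ x, HasDerivAt e (e' x) x) (hn : ∀ x, HasDerivAt n (n' x) x)
    (hn' : ∀ x, |n' x| ≤ ζ') (hβ : 0 ≤ β)
    (hmargin : ∀ x, α * e x * n x ≤ (α * β - ζ') * |e x|)
    (hint : IntervalIntegrable (fun x => (e' x + α * e x) * (n x - β * Real.sign (e x)))
      volume a b) :
    ∫ x in a..b, (e' x + α * e x) * (n x - β * Real.sign (e x))
      ≤ (β * |e a| - e a * n a) - (β * |e b| - e b * n b) := by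
  have hec : Continuous e := continuous_iff_continuousAt.2 fun x => (he x).continuousAt
  have hnc : Continuous n := continuous_iff_continuousAt.2 fun x => (hn x).continuousAt
  have hshifted := hint.sub ((by fun_prop : Continuous fun x =>
    α * e x * n x - (α * β - ζ') * |e x|).intervalIntegrable a b)
  have hleft : ∀ x, (if e x = 0 then -|e' x| else e' x * Real.sign (e x))
      ≤ e' x * Real.sign (e x) := by
    intro x
    split_ifs with h
    · simp [h]
    · rfl
  calc ∫ x in a..b, (e' x + α * e x) * (n x - β * Real.sign (e x))
      ≤ ∫ x in a..b, ((e' x + α * e x) * (n x - β * Real.sign (e x))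
          - (α * e x * n x - (α * β - ζ') * |e x|)) :=
        integral_mono_on hab hint hshifted fun x _ =>
          (le_sub_self_iff _).2 (sub_nonpos.2 (hmargin x))
    _ ≤ (e b * n b - β * |e b|) - (e a * n a - β * |e a|) :=
        integral_le_sub_of_hasDeriv_left_of_le hab
          ((hec.mul hnc).sub (hec.abs.const_mul β)).continuousOn
          (fun x _ => ((he x).mul (hn x)).hasDerivWithinAt.sub
            ((he x).hasDerivWithinAt_abs_Iio.const_mul β))
          hshifted fun x _ => rise_integrand_sub_le (hleft x) hβ (hn' x)
    _ = (β * |e a| - e a * n a) - (β * |e b| - e b * n b) := by ring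

theorem arise_integral_bound
    (t₀ α₂ β ζN ζN' : ℝ) (hα₂ : 0 < α₂)
    (e₂ e₂' Nd Nd' : ℝ → ℝ)
    (he₂ : ∀ t, HasDerivAt e₂ (e₂' t) t)
    (hNd : ∀ t, HasDerivAt Nd (Nd' t) t)
    (hNdb : ∀ t, |Nd t| ≤ ζN) (hNd'b : ∀ t, |Nd' t| ≤ ζN')
    (hβ : ζN + ζN' / α₂ < β) :
    ∀ t, t₀ ≤ t →
      (∫ τ in t₀..t, (e₂' τ + α₂ * e₂ τ) * (Nd τ - β * Real.sign (e₂ τ)))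
        ≤ β * |e₂ t₀| - e₂ t₀ * Nd t₀ := by
  intro t ht
  have hgain : α₂ * ζN + ζN' < α₂ * β := by
    simpa [mul_add, mul_div_cancel₀ _ hα₂.ne'] using mul_lt_mul_of_pos_left hβ hα₂
  have hζN : ζN ≤ β := by
    have := div_nonneg ((abs_nonneg _).trans (hNd'b t₀)) hα₂.le
    linarith
  have hβ₀ : 0 ≤ β := ((abs_nonneg _).trans (hNdb t₀)).trans hζN
  have hV : ∀ x, 0 ≤ β * |e₂ x| - e₂ x * Nd x := fun x => by
    linarith [mul_le_abs_mul_of_abs_le (x := e₂ x) (hNdb x),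
      mul_le_mul_of_nonneg_left hζN (abs_nonneg (e₂ x))]
  by_cases hint : IntervalIntegrable
      (fun τ => (e₂' τ + α₂ * e₂ τ) * (Nd τ - β * Real.sign (e₂ τ))) volume t₀ t
  · have hmargin : ∀ x, α₂ * e₂ x * Nd x ≤ (α₂ * β - ζN') * |e₂ x| := fun x => by
      linarith [mul_le_mul_of_nonneg_left (mul_le_abs_mul_of_abs_le (x := e₂ x) (hNdb x)) hα₂.le,
        mul_le_mul_of_nonneg_left hgain.le (abs_nonneg (e₂ x))]
    linarith [integral_rise_integrand_le ht he₂ hNd hNd'b hβ₀ hmargin hint, hV t]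
  · rw [integral_undef hint]
    exact hV t₀
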